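/- arXiv:1701.05288 — 2 statements merged into one kernel-verified Lean document; each statement's English description precedes it below -/
import Mathlib

section
/- Let A be an associative algebra over ℂ, let c ∈ ℂ, and let h₀, h₁, h₂, x₀, x₁, x₂ ∈ A satisfy: [h₀, x_r] = c·x_r for r = 0, 1, 2; [h₁, x₀] − [h₀, x₁] = (c/2)·(h₀x₀ + x₀h₀); [h₁, x₁] − [h₀, x₂] = (c/2)·(h₀x₁ + x₁h₀); and [h₂, x₀] − [h₁, x₁] = (c/2)·(h₁x₀ + x₀h₁). Then, setting h̃₂ = h₂ − h₀h₁ + (1/3)·h₀³, one has [h̃₂, x₀] = c·x₂ + (c³/12)·x₀. -/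
/-- Abstract form of the key proposition on `h̃₂ = h₂ − h₀h₁ + (1/3)h₀³`:
`[h̃₂, x₀] = c·x₂ + (c³/12)·x₀`. -/
theorem stmt5 {A : Type*} [Ring A] [Algebra ℂ A] (c : ℂ)
    (h₀ h₁ h₂ x₀ x₁ x₂ : A)
    (e0 : h₀ * x₀ - x₀ * h₀ = c • x₀)
    (e1 : h₀ * x₁ - x₁ * h₀ = c • x₁)
    (e2 : h₀ * x₂ - x₂ * h₀ = c • x₂)
    (f0 : (h₁ * x₀ - x₀ * h₁) - (h₀ * x₁ - x₁ * h₀)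
            = (c / 2) • (h₀ * x₀ + x₀ * h₀))
    (f1 : (h₁ * x₁ - x₁ * h₁) - (h₀ * x₂ - x₂ * h₀)
            = (c / 2) • (h₀ * x₁ + x₁ * h₀))
    (f2 : (h₂ * x₀ - x₀ * h₂) - (h₁ * x₁ - x₁ * h₁)
            = (c / 2) • (h₁ * x₀ + x₀ * h₁)) :
    (h₂ - h₀ * h₁ + (1 / 3 : ℂ) • (h₀ ^ 3)) * x₀
        - x₀ * (h₂ - h₀ * h₁ + (1 / 3 : ℂ) • (h₀ ^ 3))
      = c • x₂ + (c ^ 3 / 12) • x₀ := by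
  linear_combination (norm := (simp only [smul_add, smul_sub, smul_smul, mul_smul_comm, smul_mul_assoc]; noncomm_ring; module)) f2 + f1 + e2 + (c / 2) • f0 - h₀ * f0 - h₀ * e1 - e0 * h₁ + (1 / 3 : ℂ) • (h₀ ^ 2 * e0) + (1 / 3 : ℂ) • (h₀ * e0 * h₀) + (1 / 3 : ℂ) • (e0 * h₀ ^ 2) + (c ^ 2 / 12) • e0 - (c / 6) • (h₀ * e0) - (c / 3) • (e0 * h₀)
end

section
/- Let A be an associative algebra over ℂ, let c ∈ ℂ with c ≠ 0, and let h₀, h₁ ∈ A and a sequence (x_r)_{r∈ℕ} in A satisfy, for all r: [h₀, x_r] = c·x_r and [h₁, x_r] − [h₀, x_{r+1}] = (c/2)·(h₀x_r + x_rh₀). Then for all r: x_{r+1} = c⁻¹·[h₁ − (1/2)h₀², x_r]. -/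
/-- The recursion `x_{r+1} = c⁻¹ [h₁ − (1/2)h₀², x_r]` in the Yangian. -/
theorem stmt16 {A : Type*} [Ring A] [Algebra ℂ A] (c : ℂ) (hc : c ≠ 0)
    (h₀ h₁ : A) (x : ℕ → A)
    (e1 : ∀ r, h₀ * x r - x r * h₀ = c • x r)
    (e2 : ∀ r, (h₁ * x r - x r * h₁) - (h₀ * x (r + 1) - x (r + 1) * h₀)
            = (c / 2) • (h₀ * x r + x r * h₀)) :
    ∀ r, x (r + 1)
      = c⁻¹ • ((h₁ - (1 / 2 : ℂ) • (h₀ ^ 2)) * x r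
          - x r * (h₁ - (1 / 2 : ℂ) • (h₀ ^ 2))) := by
  intro r
  have hsq : h₀ ^ 2 * x r - x r * h₀ ^ 2 = c • (h₀ * x r + x r * h₀) := by
    have h := e1 r
    have expand : h₀ ^ 2 * x r - x r * h₀ ^ 2
        = h₀ * (h₀ * x r - x r * h₀) + (h₀ * x r - x r * h₀) * h₀ := by
      noncomm_ring
    rw [expand, h, mul_smul_comm, smul_mul_assoc, ← smul_add]
  have key : (h₁ - (1 / 2 : ℂ) • (h₀ ^ 2)) * x r
      - x r * (h₁ - (1 / 2 : ℂ) • (h₀ ^ 2)) = c • x (r + 1) := by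
    have expand : (h₁ - (1 / 2 : ℂ) • (h₀ ^ 2)) * x r
        - x r * (h₁ - (1 / 2 : ℂ) • (h₀ ^ 2))
        = (h₁ * x r - x r * h₁) - (1 / 2 : ℂ) • (h₀ ^ 2 * x r - x r * h₀ ^ 2) := by
      simp only [sub_mul, mul_sub, smul_mul_assoc, mul_smul_comm, smul_sub]
      abel
    have h2 := e2 r
    have h1 := e1 (r + 1)
    rw [expand, hsq, smul_smul]
    have : h₁ * x r - x r * h₁
        = (c / 2) • (h₀ * x r + x r * h₀) + (h₀ * x (r + 1) - x (r + 1) * h₀) := by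
      rw [← h2]; abel
    rw [this, h1]
    have : (1 / 2 : ℂ) * c = c / 2 := by ring
    rw [this]
    abel
  rw [key, smul_smul, inv_mul_cancel₀ hc, one_smul]
end
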